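/- Let λ, σ be nonzero complex numbers and η a complex number. Define operators on ℂ[S,T]: L_m f(S,T) = λ^m (T + mS + mη) f(S, T-m), H_m f(S,T) = λ^m S f(S, T-m), J_m f(S,T) = λ^m σ f(S+1, T-m), I_m f = 0, for m ∈ ℤ. Then these operators satisfy: [L_m, L_n] = (n-m)L_{m+n}, [L_m, H_n] = n H_{m+n}, [L_m, J_n] = (n-m) J_{m+n}, [H_m, J_n] = -J_{m+n}, and [H_m, H_n] = [J_m, J_n] = 0 as operators on ℂ[S,T]. -/
import Mathlib


open MvPolynomial

/-- Substitution `f(S,T) ↦ f(S, T-m)` on `ℂ[S,T]`, as a linear map. -/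
noncomputable def subTm (m : ℂ) : MvPolynomial (Fin 2) ℂ →ₗ[ℂ] MvPolynomial (Fin 2) ℂ :=
  (aeval ![X 0, X 1 - C m] : MvPolynomial (Fin 2) ℂ →ₐ[ℂ] MvPolynomial (Fin 2) ℂ).toLinearMap

/-- Substitution `f(S,T) ↦ f(S+1, T-m)` on `ℂ[S,T]`, as a linear map. -/
noncomputable def subSTm (m : ℂ) : MvPolynomial (Fin 2) ℂ →ₗ[ℂ] MvPolynomial (Fin 2) ℂ :=
  (aeval ![X 0 + 1, X 1 - C m] : MvPolynomial (Fin 2) ℂ →ₐ[ℂ] MvPolynomial (Fin 2) ℂ).toLinearMap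

@[simp] lemma subTm_X0 (a : ℂ) : subTm a (X 0) = X 0 := by simp [subTm]
@[simp] lemma subTm_X1 (a : ℂ) : subTm a (X 1) = X 1 - C a := by simp [subTm]
@[simp] lemma subTm_C (a c : ℂ) : subTm a (C c) = C c := by simp [subTm]
@[simp] lemma subTm_mul (a : ℂ) (p q : MvPolynomial (Fin 2) ℂ) :
    subTm a (p * q) = subTm a p * subTm a q := by simp [subTm]
@[simp] lemma subSTm_X0 (a : ℂ) : subSTm a (X 0) = X 0 + 1 := by simp [subSTm]
@[simp] lemma subSTm_X1 (a : ℂ) : subSTm a (X 1) = X 1 - C a := by simp [subSTm]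
@[simp] lemma subSTm_C (a c : ℂ) : subSTm a (C c) = C c := by simp [subSTm]
@[simp] lemma subSTm_mul (a : ℂ) (p q : MvPolynomial (Fin 2) ℂ) :
    subSTm a (p * q) = subSTm a p * subSTm a q := by simp [subSTm]

@[simp] lemma subTm_subTm (a b : ℂ) (f : MvPolynomial (Fin 2) ℂ) :
    subTm a (subTm b f) = subTm (a + b) f := by
  have : (aeval ![X 0, X 1 - C a] : MvPolynomial (Fin 2) ℂ →ₐ[ℂ] MvPolynomial (Fin 2) ℂ).comp
      (aeval ![X 0, X 1 - C b]) = aeval ![X 0, X 1 - C (a + b)] := by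
    apply algHom_ext; intro i; fin_cases i <;> simp <;> ring
  simpa [subTm] using AlgHom.congr_fun this f

@[simp] lemma subTm_subSTm (a b : ℂ) (f : MvPolynomial (Fin 2) ℂ) :
    subTm a (subSTm b f) = subSTm (a + b) f := by
  have : (aeval ![X 0, X 1 - C a] : MvPolynomial (Fin 2) ℂ →ₐ[ℂ] MvPolynomial (Fin 2) ℂ).comp
      (aeval ![X 0 + 1, X 1 - C b]) = aeval ![X 0 + 1, X 1 - C (a + b)] := by
    apply algHom_ext; intro i; fin_cases i <;> simp <;> ring
  simpa [subTm, subSTm] using AlgHom.congr_fun this f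

@[simp] lemma subSTm_subTm (a b : ℂ) (f : MvPolynomial (Fin 2) ℂ) :
    subSTm a (subTm b f) = subSTm (a + b) f := by
  have : (aeval ![X 0 + 1, X 1 - C a] : MvPolynomial (Fin 2) ℂ →ₐ[ℂ] MvPolynomial (Fin 2) ℂ).comp
      (aeval ![X 0, X 1 - C b]) = aeval ![X 0 + 1, X 1 - C (a + b)] := by
    apply algHom_ext; intro i; fin_cases i <;> simp <;> ring
  simpa [subTm, subSTm] using AlgHom.congr_fun this f

lemma subSTm_subSTm (a b : ℂ) (f : MvPolynomial (Fin 2) ℂ) :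
    subSTm a (subSTm b f) = subSTm b (subSTm a f) := by
  have : (aeval ![X 0 + 1, X 1 - C a] : MvPolynomial (Fin 2) ℂ →ₐ[ℂ] MvPolynomial (Fin 2) ℂ).comp
      (aeval ![X 0 + 1, X 1 - C b]) = (aeval ![X 0 + 1, X 1 - C b] : MvPolynomial (Fin 2) ℂ →ₐ[ℂ] MvPolynomial (Fin 2) ℂ).comp
      (aeval ![X 0 + 1, X 1 - C a]) := by
    apply algHom_ext; intro i; fin_cases i <;> simp <;> ring
  simpa [subSTm] using AlgHom.congr_fun this f

/-- `L_m f(S,T) = λ^m (T + mS + mη) f(S, T-m)`. -/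
noncomputable def opL' (lam eta : ℂ) (m : ℤ) :
    MvPolynomial (Fin 2) ℂ →ₗ[ℂ] MvPolynomial (Fin 2) ℂ :=
  lam ^ m • (LinearMap.mulLeft ℂ (X 1 + (m : ℂ) • X 0 + C ((m : ℂ) * eta)) ∘ₗ subTm (m : ℂ))

/-- `H_m f(S,T) = λ^m S f(S, T-m)`. -/
noncomputable def opH' (lam : ℂ) (m : ℤ) :
    MvPolynomial (Fin 2) ℂ →ₗ[ℂ] MvPolynomial (Fin 2) ℂ :=
  lam ^ m • (LinearMap.mulLeft ℂ (X 0) ∘ₗ subTm (m : ℂ))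

/-- `J_m f(S,T) = λ^m σ f(S+1, T-m)`. -/
noncomputable def opJ' (lam sig : ℂ) (m : ℤ) :
    MvPolynomial (Fin 2) ℂ →ₗ[ℂ] MvPolynomial (Fin 2) ℂ :=
  (lam ^ m * sig) • subSTm (m : ℂ)

theorem stmt16 (lam sig eta : ℂ) (hlam : lam ≠ 0) (hsig : sig ≠ 0) (m n : ℤ) :
    opL' lam eta m ∘ₗ opL' lam eta n - opL' lam eta n ∘ₗ opL' lam eta m
        = ((n : ℂ) - (m : ℂ)) • opL' lam eta (m + n) ∧
    opL' lam eta m ∘ₗ opH' lam n - opH' lam n ∘ₗ opL' lam eta m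
        = (n : ℂ) • opH' lam (m + n) ∧
    opL' lam eta m ∘ₗ opJ' lam sig n - opJ' lam sig n ∘ₗ opL' lam eta m
        = ((n : ℂ) - (m : ℂ)) • opJ' lam sig (m + n) ∧
    opH' lam m ∘ₗ opJ' lam sig n - opJ' lam sig n ∘ₗ opH' lam m = -opJ' lam sig (m + n) ∧
    opH' lam m ∘ₗ opH' lam n - opH' lam n ∘ₗ opH' lam m = 0 ∧
    opJ' lam sig m ∘ₗ opJ' lam sig n - opJ' lam sig n ∘ₗ opJ' lam sig m = 0 := by
  refine ⟨?_, ?_, ?_, ?_, ?_, ?_⟩ <;>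
  · ext f
    simp only [opL', opH', opJ', LinearMap.sub_apply, LinearMap.smul_apply, LinearMap.comp_apply,
      LinearMap.mulLeft_apply, LinearMap.neg_apply, LinearMap.zero_apply, map_smul, map_add,
      map_mul, map_sub, subTm_mul, subTm_X0, subTm_X1, subTm_C, subTm_subTm, subSTm_mul,
      subSTm_X0, subSTm_X1, subSTm_C, subTm_subSTm, subSTm_subTm, smul_eq_C_mul, Int.cast_add,
      zpow_add₀ hlam]
    try rw [subSTm_subSTm]
    push_cast
    ring
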